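/- arXiv:2303.01984 — 2 statements merged into one kernel-verified Lean document; each statement's English description precedes it below -/
import Mathlib

section
/- Let K be a local field of characteristic p, L = K(y) a ramified C_p-extension with y^p − y = β, v_K(β) = −b < 0, p ∤ b. If ℓ ∈ L satisfies v_L(ℓ) > −b, then ℓ ∈ L^℘ + K. -/
/-!
Write `ℓ = ∑_{i < p} c_i y^i`. Since `v_L(c y^i) = p v_K(c) - i b` and `p ∤ b`, the nonzero terms
have pairwise distinct valuations, hence all of them have valuation `≥ v_L(ℓ) > -b`; the constant
term lies in `K`. A monomial `c y^i` with `0 < i < p` and `v_L(c y^i) ≥ m ≥ 1 - b` has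
`v_K(c) ≥ 1`, so `c = a^p - a` with `v_K(a) ≥ v_K(c)`, the root being `-∑ c^(p^j)`. As
`y^p = y + β`, `℘(a y^i) = c y^i + a^p β^i + ∑_{0<j<i} binom(i, j) a^p β^(i-j) y^j`, and the
terms of the last sum have valuation `≥ m + 1`. Iterating, the corrections in `L` and in `K`
have valuations tending to infinity, so their sums converge by completeness.
-/

/-- A normalized (surjective onto `ℤ`) discrete valuation on a field,
with respect to which the field is complete. -/
structure DVal (K : Type*) [Field K] where
  v : K → WithTop ℤ
  v_zero : v 0 = ⊤
  v_ne_top : ∀ x : K, x ≠ 0 → v x ≠ ⊤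
  v_mul : ∀ x y : K, v (x * y) = v x + v y
  v_add : ∀ x y : K, min (v x) (v y) ≤ v (x + y)
  v_surj : ∀ n : ℤ, ∃ x : K, v x = (n : WithTop ℤ)
  complete : ∀ f : ℕ → K,
    (∀ n : ℕ, ((n : ℤ) : WithTop ℤ) ≤ v (f (n + 1) - f n)) →
    ∃ x : K, ∀ n : ℕ, ((n : ℤ) : WithTop ℤ) ≤ v (x - f n)

namespace DVal

variable {F : Type*} [Field F] (d : DVal F)

theorem v_one : d.v 1 = 0 := by
  have h := d.v_mul 1 1
  rw [one_mul] at h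
  lift d.v 1 to ℤ using d.v_ne_top 1 one_ne_zero with a
  norm_cast at h ⊢
  omega

def toAddValuation : AddValuation F (WithTop ℤ) :=
  AddValuation.of d.v d.v_zero d.v_one d.v_add d.v_mul

theorem v_neg (x : F) : d.v (-x) = d.v x := d.toAddValuation.map_neg x

theorem v_pow (x : F) (n : ℕ) : d.v (x ^ n) = n • d.v x := d.toAddValuation.map_pow x n

theorem le_v_add {x y : F} {g : WithTop ℤ} (hx : g ≤ d.v x) (hy : g ≤ d.v y) :
    g ≤ d.v (x + y) :=
  d.toAddValuation.map_le_add hx hy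

theorem le_v_sub {x y : F} {g : WithTop ℤ} (hx : g ≤ d.v x) (hy : g ≤ d.v y) :
    g ≤ d.v (x - y) :=
  d.toAddValuation.map_le_sub hx hy

theorem le_v_sum {ι : Type*} {s : Finset ι} {f : ι → F} {g : WithTop ℤ}
    (hf : ∀ i ∈ s, g ≤ d.v (f i)) : g ≤ d.v (∑ i ∈ s, f i) :=
  d.toAddValuation.map_le_sum hf

theorem v_add_eq_left {x y : F} (h : d.v x < d.v y) : d.v (x + y) = d.v x :=
  d.toAddValuation.map_add_eq_of_lt_left h

theorem v_natCast_nonneg (n : ℕ) : 0 ≤ d.v (n : F) := by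
  induction n with
  | zero => simp [d.v_zero]
  | succ n ih => exact_mod_cast d.le_v_add ih d.v_one.ge

theorem le_v_mul {x y : F} {a b : ℤ} (hx : (a : WithTop ℤ) ≤ d.v x)
    (hy : (b : WithTop ℤ) ≤ d.v y) : ((a + b : ℤ) : WithTop ℤ) ≤ d.v (x * y) := by
  rw [d.v_mul, WithTop.coe_add]
  exact add_le_add hx hy

theorem le_v_pow {x : F} {a : ℤ} (hx : (a : WithTop ℤ) ≤ d.v x) (n : ℕ) :
    ((n * a : ℤ) : WithTop ℤ) ≤ d.v (x ^ n) := by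
  rw [d.v_pow, ← nsmul_eq_mul, WithTop.coe_nsmul]
  exact nsmul_le_nsmul_right hx n

theorem v_pow_of_eq {x : F} {a : ℤ} (hx : d.v x = a) (n : ℕ) :
    d.v (x ^ n) = ((n * a : ℤ) : WithTop ℤ) := by
  rw [d.v_pow, hx, ← nsmul_eq_mul, WithTop.coe_nsmul]

theorem eq_zero_of_forall_le {x : F} (h : ∀ n : ℕ, ((n : ℤ) : WithTop ℤ) ≤ d.v x) : x = 0 := by
  by_contra hx
  lift d.v x to ℤ using d.v_ne_top x hx with a
  have := h (a.toNat + 1)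
  norm_cast at this
  omega

theorem exists_le_v_sub_sum (m : ℤ) (g : ℕ → F)
    (hg : ∀ n : ℕ, ((m + n : ℤ) : WithTop ℤ) ≤ d.v (g n)) :
    ∃ x : F, ∀ n : ℕ, ((m + n : ℤ) : WithTop ℤ) ≤ d.v (x - ∑ j ∈ Finset.range n, g j) := by
  have htail : ∀ k l : ℕ, k ≤ l →
      ((m + k : ℤ) : WithTop ℤ) ≤ d.v (∑ j ∈ Finset.range l, g j - ∑ j ∈ Finset.range k, g j) := by
    intro k l hkl
    rw [← Finset.sum_Ico_eq_sub _ hkl]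
    refine d.le_v_sum fun j hj => (hg j).trans' ?_
    have := (Finset.mem_Ico.mp hj).1
    exact_mod_cast (by omega : m + k ≤ m + j)
  set N := (-m).toNat
  obtain ⟨x, hx⟩ := d.complete (fun n => ∑ j ∈ Finset.range (n + N), g j) fun n =>
    (htail _ _ (by omega)).trans' (by exact_mod_cast (by omega : (n : ℤ) ≤ m + (n + N : ℕ)))
  refine ⟨x, fun k => ?_⟩
  set n := (m + k).toNat
  have h1 : ((m + k : ℤ) : WithTop ℤ) ≤ d.v (x - ∑ j ∈ Finset.range (n + N), g j) :=
    (hx n).trans' (by exact_mod_cast (by omega : m + k ≤ n))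
  simpa using d.le_v_add h1 (htail k (n + N) (by omega))

theorem v_eq_of_v_pow_sub_self {p : ℕ} (hp : 1 < p) {y : F} {a : ℤ} (ha : a < 0)
    (h : d.v (y ^ p - y) = ((p * a : ℤ) : WithTop ℤ)) : d.v y = a := by
  have hy : y ≠ 0 := by
    rintro rfl
    rw [zero_pow (by omega), sub_zero, d.v_zero] at h
    exact WithTop.top_ne_coe h
  lift d.v y to ℤ using d.v_ne_top y hy with w hw
  have hpow : d.v (y ^ p) = ((p * w : ℤ) : WithTop ℤ) := d.v_pow_of_eq hw.symm p
  have hp' : (1 : ℤ) < p := by exact_mod_cast hp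
  by_cases hw0 : 0 ≤ w
  · have hnonneg : ((0 : ℤ) : WithTop ℤ) ≤ d.v (y ^ p - y) :=
      d.le_v_sub (by rw [hpow]; exact_mod_cast (by positivity : (0 : ℤ) ≤ p * w))
        (by rw [← hw]; exact_mod_cast hw0)
    rw [h, WithTop.coe_le_coe] at hnonneg
    nlinarith
  · have hlt : d.v (y ^ p) < d.v (-y) := by
      rw [hpow, d.v_neg, ← hw, WithTop.coe_lt_coe]
      nlinarith
    rw [sub_eq_add_neg, d.v_add_eq_left hlt, hpow, WithTop.coe_eq_coe] at h
    exact_mod_cast mul_left_cancel₀ (by omega : (p : ℤ) ≠ 0) h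

theorem v_sum_le_of_v_ne {ι : Type*} {s : Finset ι} {f : ι → F}
    (hf : ∀ i ∈ s, ∀ j ∈ s, i ≠ j → f i ≠ 0 → f j ≠ 0 → d.v (f i) ≠ d.v (f j))
    {j : ι} (hj : j ∈ s) : d.v (∑ i ∈ s, f i) ≤ d.v (f j) := by
  classical
  obtain ⟨k, hk, hmin⟩ := s.exists_min_image (fun i => d.v (f i)) ⟨j, hj⟩
  refine (hmin j hj).trans' ?_
  by_cases hk0 : f k = 0
  · simp [hk0, d.v_zero]
  have hrest : d.v (f k) < d.v (∑ i ∈ s.erase k, f i) := by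
    refine d.toAddValuation.map_lt_sum (d.v_ne_top _ hk0) fun i hi => ?_
    obtain ⟨hik, his⟩ := Finset.mem_erase.mp hi
    by_cases hi0 : f i = 0
    · simpa [hi0, d.v_zero, lt_top_iff_ne_top] using d.v_ne_top _ hk0
    · exact (hmin i his).lt_of_ne (hf k hk i his hik.symm hk0 hi0)
  rw [← Finset.add_sum_erase s f hk, d.v_add_eq_left hrest]

end DVal

theorem Nat.Prime.eq_of_mul_sub_mul_eq {p b i j : ℕ} (hp : p.Prime) (hbp : ¬ p ∣ b)
    (hi : i < p) (hj : j < p) {zi zj : ℤ} (h : p * zi - i * b = p * zj - j * b) : i = j := by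
  have := Fact.mk hp
  have h' := congrArg (Int.cast : ℤ → ZMod p) h
  push_cast [ZMod.natCast_self, zero_mul, zero_sub, neg_inj] at h'
  have hb : (b : ZMod p) ≠ 0 := (ZMod.natCast_eq_zero_iff b p).not.mpr hbp
  have hij := mul_right_cancel₀ hb h'
  rwa [ZMod.natCast_eq_natCast_iff', Nat.mod_eq_of_lt hi, Nat.mod_eq_of_lt hj] at hij

theorem exists_seq_of_forall_exists {α : Type*} {S : ℕ → Set α} {R : ℕ → α → α → Prop}
    (h : ∀ n, ∀ x ∈ S n, ∃ x' ∈ S (n + 1), R n x x') {x₀ : α} (h₀ : x₀ ∈ S 0) :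
    ∃ xs : ℕ → α, xs 0 = x₀ ∧ ∀ n, xs n ∈ S n ∧ R n (xs n) (xs (n + 1)) := by
  choose! f hfS hfR using h
  let xs : ℕ → α := fun n => Nat.rec x₀ f n
  have hS : ∀ n, xs n ∈ S n := fun n => by
    induction n with
    | zero => exact h₀
    | succ n ih => exact hfS n _ ih
  exact ⟨xs, rfl, fun n => ⟨hS n, hfR n _ (hS n)⟩⟩

theorem WithTop.coe_add_one_le_of_lt {a : ℤ} {x : WithTop ℤ} (h : (a : WithTop ℤ) < x) :
    ((a + 1 : ℤ) : WithTop ℤ) ≤ x := by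
  induction x using WithTop.recTopCoe with
  | top => exact le_top
  | coe x => exact_mod_cast Int.add_one_le_of_lt (by exact_mod_cast h)

section ArtinSchreier

variable (F : Type*) [Field F] (p : ℕ) [Fact p.Prime] [CharP F p]

def artinSchreier : F →+ F := (frobenius F p).toAddMonoidHom - AddMonoidHom.id F

variable {F p}

theorem artinSchreier_apply (x : F) : artinSchreier F p x = x ^ p - x := rfl

theorem DVal.le_v_artinSchreier (d : DVal F) {x : F} {a : ℤ} (ha : 0 ≤ a)
    (hx : (a : WithTop ℤ) ≤ d.v x) : (a : WithTop ℤ) ≤ d.v (artinSchreier F p x) := by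
  have hpow := d.le_v_pow hx p
  have hpa : a ≤ p * a := le_mul_of_one_le_left ha (by exact_mod_cast (Fact.out : p.Prime).one_le)
  exact d.le_v_sub (hpow.trans' (by exact_mod_cast hpa)) hx

theorem DVal.exists_artinSchreier_eq (d : DVal F) {c : F} {γ : ℤ} (hγ : 1 ≤ γ)
    (hc : (γ : WithTop ℤ) ≤ d.v c) :
    ∃ a : F, artinSchreier F p a = c ∧ (γ : WithTop ℤ) ≤ d.v a := by
  have hp : p.Prime := Fact.out
  set g : ℕ → F := fun j => c ^ p ^ j
  have hg : ∀ n : ℕ, ((γ + n : ℤ) : WithTop ℤ) ≤ d.v (g n) := by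
    intro n
    refine (d.le_v_pow hc _).trans' ?_
    have hn : (n : ℤ) + 1 ≤ (p ^ n : ℕ) := by exact_mod_cast Nat.lt_pow_self hp.one_lt
    exact_mod_cast (by nlinarith : γ + n ≤ (p ^ n : ℕ) * γ)
  obtain ⟨x, hx⟩ := d.exists_le_v_sub_sum γ g hg
  -- `℘ (c ^ p ^ j) = c ^ p ^ (j + 1) - c ^ p ^ j` telescopes
  have hsum : ∀ n, artinSchreier F p (∑ j ∈ Finset.range n, g j) = g n - c := by
    intro n
    simp only [map_sum, artinSchreier_apply, g, ← pow_mul, ← pow_succ]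
    simpa using Finset.sum_range_sub (fun j => c ^ p ^ j) n
  have hxc : artinSchreier F p x + c = 0 := by
    refine d.eq_zero_of_forall_le fun n => ?_
    have hsplit : artinSchreier F p x + c =
        artinSchreier F p (x - ∑ j ∈ Finset.range n, g j) + g n := by
      rw [map_sub, hsum]
      ring
    have hγn : (0 : ℤ) ≤ γ + n := by omega
    rw [hsplit]
    exact (d.le_v_add (d.le_v_artinSchreier hγn (hx n)) (hg n)).trans'
      (by exact_mod_cast (by omega : (n : ℤ) ≤ γ + n))
  refine ⟨-x, by rw [map_neg]; linear_combination -hxc, ?_⟩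
  simpa [d.v_neg] using hx 0

end ArtinSchreier

def monomialClosure (K : Type*) {L : Type*} [Field K] [Field L] [Algebra K L] (p : ℕ)
    (dvL : DVal L) (y : L) (m : ℤ) : AddSubgroup L :=
  AddSubgroup.closure {x | (m : WithTop ℤ) ≤ dvL.v x ∧
    ∃ (c : K) (i : ℕ), 0 < i ∧ i < p ∧ x = algebraMap K L c * y ^ i}

section Extension

variable {p : ℕ} {K L : Type*} [Field K] [Field L] [Algebra K L] {dvK : DVal K} {dvL : DVal L}
  (hcompat : ∀ x : K, dvL.v (algebraMap K L x) = ((p : ℤ) : WithTop ℤ) * dvK.v x)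
  {b : ℕ} {y : L} (hvy : dvL.v y = ((-(b : ℤ) : ℤ) : WithTop ℤ))

include hcompat in
theorem le_v_algebraMap {c : K} {a : ℤ} (h : (a : WithTop ℤ) ≤ dvK.v c) :
    ((p * a : ℤ) : WithTop ℤ) ≤ dvL.v (algebraMap K L c) := by
  rcases eq_or_ne c 0 with rfl | hc
  · simp [dvL.v_zero]
  lift dvK.v c to ℤ using dvK.v_ne_top c hc with z hz
  rw [hcompat, ← hz]
  norm_cast at h ⊢
  exact Int.mul_le_mul_of_nonneg_left h (Int.natCast_nonneg p)

include hcompat hvy in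
theorem v_monomial_of_eq {c : K} {z : ℤ} (h : dvK.v c = z) (i : ℕ) :
    dvL.v (algebraMap K L c * y ^ i) = ((p * z - i * b : ℤ) : WithTop ℤ) := by
  rw [dvL.v_mul, hcompat, h, dvL.v_pow_of_eq hvy, ← WithTop.coe_mul, ← WithTop.coe_add]
  congr 1
  ring

include hcompat hvy in
theorem le_v_monomial {c : K} {z : ℤ} (h : (z : WithTop ℤ) ≤ dvK.v c) (i : ℕ) :
    ((p * z - i * b : ℤ) : WithTop ℤ) ≤ dvL.v (algebraMap K L c * y ^ i) := by
  rw [dvL.v_mul, dvL.v_pow_of_eq hvy, sub_eq_add_neg, WithTop.coe_add]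
  exact add_le_add (le_v_algebraMap hcompat h) (WithTop.coe_le_coe.mpr (le_of_eq (by ring)))

theorem le_v_of_mem_monomialClosure {m : ℤ} {x : L} (hx : x ∈ monomialClosure K p dvL y m) :
    (m : WithTop ℤ) ≤ dvL.v x := by
  induction hx using AddSubgroup.closure_induction with
  | mem x hx => exact hx.1
  | zero => simp [dvL.v_zero]
  | add x x' _ _ h h' => exact dvL.le_v_add h h'
  | neg x _ h => rwa [dvL.v_neg]

include hcompat hvy in
theorem sub_algebraMap_mem_monomialClosure (hp : p.Prime) (hbp : ¬ p ∣ b) {c : ℕ → K} {ℓ : L}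
    (hℓ : ℓ = ∑ i ∈ Finset.range p, algebraMap K L (c i) * y ^ i)
    (hv : ((-(b : ℤ) : ℤ) : WithTop ℤ) < dvL.v ℓ) :
    ℓ - algebraMap K L (c 0) ∈ monomialClosure K p dvL y (1 - b) := by
  -- `v_L (c i y ^ i) ≡ -i b [ZMOD p]`, so the nonzero terms have distinct valuations
  have hdistinct : ∀ i ∈ Finset.range p, ∀ j ∈ Finset.range p, i ≠ j →
      algebraMap K L (c i) * y ^ i ≠ 0 → algebraMap K L (c j) * y ^ j ≠ 0 →
      dvL.v (algebraMap K L (c i) * y ^ i) ≠ dvL.v (algebraMap K L (c j) * y ^ j) := by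
    intro i hi j hj hij hi0 hj0
    lift dvK.v (c i) to ℤ using dvK.v_ne_top _ (by simpa using left_ne_zero_of_mul hi0) with zi hzi
    lift dvK.v (c j) to ℤ using dvK.v_ne_top _ (by simpa using left_ne_zero_of_mul hj0) with zj hzj
    rw [v_monomial_of_eq hcompat hvy hzi.symm, v_monomial_of_eq hcompat hvy hzj.symm, Ne,
      WithTop.coe_eq_coe]
    exact fun h => hij (hp.eq_of_mul_sub_mul_eq hbp (Finset.mem_range.mp hi)
      (Finset.mem_range.mp hj) h)
  rw [hℓ, Finset.sum_range_eq_add_Ico _ hp.pos, pow_zero, mul_one, add_sub_cancel_left]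
  refine AddSubgroup.sum_mem _ fun i hi => AddSubgroup.subset_closure ⟨?_, c i, i, ?_⟩
  · have hle := dvL.v_sum_le_of_v_ne hdistinct (Finset.mem_range.mpr (Finset.mem_Ico.mp hi).2)
    rw [← hℓ] at hle
    refine hle.trans' ((WithTop.coe_add_one_le_of_lt hv).trans' ?_)
    exact WithTop.coe_le_coe.mpr (by omega)
  · exact ⟨(Finset.mem_Ico.mp hi).1, (Finset.mem_Ico.mp hi).2, rfl⟩

variable [Fact p.Prime] [CharP K p] [CharP L p]

theorem artinSchreier_algebraMap_mul_pow {β : K} (hy : y ^ p - y = algebraMap K L β) (a : K)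
    {i : ℕ} (hi : 0 < i) :
    artinSchreier L p (algebraMap K L a * y ^ i) =
      algebraMap K L (artinSchreier K p a) * y ^ i + algebraMap K L (a ^ p * β ^ i) +
        ∑ j ∈ Finset.Ico 1 i, algebraMap K L (a ^ p * β ^ (i - j) * i.choose j) * y ^ j := by
  have hyp : y ^ p = y + algebraMap K L β := by linear_combination hy
  rw [artinSchreier_apply, mul_pow, ← pow_mul, mul_comm i p, pow_mul, hyp, add_pow,
    Finset.sum_range_succ, Finset.sum_range_eq_add_Ico _ hi]
  simp only [artinSchreier_apply, map_sub, map_mul, map_pow, map_natCast, Nat.choose_self,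
    Nat.choose_zero_right, Nat.sub_self, Nat.sub_zero]
  set A := algebraMap K L a
  set B := algebraMap K L β
  have hsum : A ^ p * ∑ j ∈ Finset.Ico 1 i, y ^ j * B ^ (i - j) * (i.choose j) =
      ∑ j ∈ Finset.Ico 1 i, A ^ p * B ^ (i - j) * (i.choose j) * y ^ j := by
    rw [Finset.mul_sum]
    exact Finset.sum_congr rfl fun j _ => by ring
  linear_combination hsum

include hcompat hvy in
theorem exists_sub_artinSchreier_mem_of_monomial {β : K} (hy : y ^ p - y = algebraMap K L β)
    (hβ : ((-(b : ℤ) : ℤ) : WithTop ℤ) ≤ dvK.v β) {m : ℤ} (hm : 1 - (b : ℤ) ≤ m) {c : K}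
    {i : ℕ} (hi : 0 < i) (hip : i < p) (hv : (m : WithTop ℤ) ≤ dvL.v (algebraMap K L c * y ^ i)) :
    ∃ t k, (m : WithTop ℤ) ≤ dvL.v t ∧ (m : WithTop ℤ) ≤ dvK.v k ∧
      algebraMap K L c * y ^ i - artinSchreier L p t - algebraMap K L k ∈
        monomialClosure K p dvL y (m + 1) := by
  have hp : p.Prime := Fact.out
  rcases eq_or_ne c 0 with rfl | hc
  · exact ⟨0, 0, by simp [dvL.v_zero], by simp [dvK.v_zero], by simp⟩
  lift dvK.v c to ℤ using dvK.v_ne_top c hc with z hz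
  rw [v_monomial_of_eq hcompat hvy hz.symm, WithTop.coe_le_coe] at hv
  have hp2 : (2 : ℤ) ≤ p := by exact_mod_cast hp.two_le
  have hib : (b : ℤ) ≤ i * b := le_mul_of_one_le_left (Int.natCast_nonneg b) (by exact_mod_cast hi)
  have hz1 : 1 ≤ z := by
    by_contra! hz0
    nlinarith
  obtain ⟨a, rfl, ha⟩ := dvK.exists_artinSchreier_eq (p := p) hz1 hz.le
  refine ⟨algebraMap K L a * y ^ i, -(a ^ p * β ^ i), ?_, ?_, ?_⟩
  · exact (le_v_monomial hcompat hvy ha i).trans' (by exact_mod_cast hv)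
  · rw [dvK.v_neg]
    refine (dvK.le_v_mul (dvK.le_v_pow ha p) (dvK.le_v_pow hβ i)).trans' ?_
    exact WithTop.coe_le_coe.mpr (by linarith)
  have hmem : ∀ j ∈ Finset.Ico 1 i, algebraMap K L (a ^ p * β ^ (i - j) * i.choose j) * y ^ j ∈
      monomialClosure K p dvL y (m + 1) := by
    intro j hj
    obtain ⟨hj1, hji⟩ := Finset.mem_Ico.mp hj
    refine AddSubgroup.subset_closure ⟨?_, _, j, hj1, hji.trans hip, rfl⟩
    have hcoeff := dvK.le_v_mul (dvK.le_v_mul (dvK.le_v_pow ha p) (dvK.le_v_pow hβ (i - j)))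
      (dvK.v_natCast_nonneg (i.choose j))
    refine (le_v_monomial hcompat hvy hcoeff j).trans' ?_
    refine WithTop.coe_le_coe.mpr ?_
    have hjb : (b : ℤ) ≤ j * b :=
      le_mul_of_one_le_left (Int.natCast_nonneg b) (by exact_mod_cast hj1)
    -- the bound is `u + (p - 1) (u + j b)` with `m ≤ u := p z - i b`, and `u + j b ≥ 1`
    have key : ((p : ℤ) - 1) * 1 ≤ (p - 1) * (p * z - i * b + j * b) :=
      mul_le_mul_of_nonneg_left (by linarith) (by linarith)
    push_cast [Nat.cast_sub hji.le]
    nlinarith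
  rw [artinSchreier_algebraMap_mul_pow hy a hi]
  convert neg_mem (AddSubgroup.sum_mem _ hmem) using 1
  simp only [map_neg]
  ring

include hcompat hvy in
theorem exists_sub_artinSchreier_mem_of_mem {β : K} (hy : y ^ p - y = algebraMap K L β)
    (hβ : ((-(b : ℤ) : ℤ) : WithTop ℤ) ≤ dvK.v β) {m : ℤ} (hm : 1 - (b : ℤ) ≤ m) {x : L}
    (hx : x ∈ monomialClosure K p dvL y m) :
    ∃ t k, (m : WithTop ℤ) ≤ dvL.v t ∧ (m : WithTop ℤ) ≤ dvK.v k ∧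
      x - artinSchreier L p t - algebraMap K L k ∈ monomialClosure K p dvL y (m + 1) := by
  induction hx using AddSubgroup.closure_induction with
  | mem x hx =>
    obtain ⟨hv, c, i, hi, hip, rfl⟩ := hx
    exact exists_sub_artinSchreier_mem_of_monomial hcompat hvy hy hβ hm hi hip hv
  | zero => exact ⟨0, 0, by simp [dvL.v_zero], by simp [dvK.v_zero], by simp⟩
  | add x x' _ _ h h' =>
    obtain ⟨t, k, ht, hk, hmem⟩ := h
    obtain ⟨t', k', ht', hk', hmem'⟩ := h'
    refine ⟨t + t', k + k', dvL.le_v_add ht ht', dvK.le_v_add hk hk', ?_⟩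
    convert add_mem hmem hmem' using 1
    simp only [map_add]
    ring
  | neg x _ h =>
    obtain ⟨t, k, ht, hk, hmem⟩ := h
    refine ⟨-t, -k, by rwa [dvL.v_neg], by rwa [dvK.v_neg], ?_⟩
    convert neg_mem hmem using 1
    simp only [map_neg]
    ring

include hcompat hvy in
theorem exists_seq_eq_artinSchreier_sum_add {β : K} (hy : y ^ p - y = algebraMap K L β)
    (hβ : ((-(b : ℤ) : ℤ) : WithTop ℤ) ≤ dvK.v β) {m : ℤ} (hm : 1 - (b : ℤ) ≤ m) {x : L}
    (hx : x ∈ monomialClosure K p dvL y m) :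
    ∃ (t : ℕ → L) (k : ℕ → K) (r : ℕ → L),
      (∀ n : ℕ, ((m + n : ℤ) : WithTop ℤ) ≤ dvL.v (t n)) ∧
      (∀ n : ℕ, ((m + n : ℤ) : WithTop ℤ) ≤ dvK.v (k n)) ∧
      ∀ n : ℕ, r n ∈ monomialClosure K p dvL y (m + n) ∧
        x = artinSchreier L p (∑ j ∈ Finset.range n, t j) +
          algebraMap K L (∑ j ∈ Finset.range n, k j) + r n := by
  obtain ⟨r, hr0, hr⟩ := exists_seq_of_forall_exists
    (S := fun n => (monomialClosure K p dvL y (m + n) : Set L))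
    (R := fun n x x' => ∃ t k, ((m + n : ℤ) : WithTop ℤ) ≤ dvL.v t ∧
      ((m + n : ℤ) : WithTop ℤ) ≤ dvK.v k ∧ x' = x - artinSchreier L p t - algebraMap K L k)
    (fun n x hx => by
      obtain ⟨t, k, ht, hk, hmem⟩ := exists_sub_artinSchreier_mem_of_mem hcompat hvy hy hβ
        (by omega : 1 - (b : ℤ) ≤ m + n) hx
      exact ⟨_, by simpa [add_assoc] using hmem, t, k, ht, hk, rfl⟩)
    (by simpa using hx)
  choose t k ht hk hstep using fun n => (hr n).2
  refine ⟨t, k, r, ht, hk, fun n => ⟨(hr n).1, ?_⟩⟩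
  induction n with
  | zero => simp [hr0]
  | succ n ih =>
    simp only [Finset.sum_range_succ, map_add]
    linear_combination ih - hstep n

include hcompat hvy in
theorem exists_eq_artinSchreier_add_of_mem {β : K} (hy : y ^ p - y = algebraMap K L β)
    (hβ : ((-(b : ℤ) : ℤ) : WithTop ℤ) ≤ dvK.v β) {m : ℤ} (hm : 1 - (b : ℤ) ≤ m) {x : L}
    (hx : x ∈ monomialClosure K p dvL y m) :
    ∃ T κ, x = artinSchreier L p T + algebraMap K L κ := by
  obtain ⟨t, k, r, ht, hk, hr⟩ := exists_seq_eq_artinSchreier_sum_add hcompat hvy hy hβ hm hx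
  obtain ⟨T, hT⟩ := dvL.exists_le_v_sub_sum m t ht
  obtain ⟨κ, hκ⟩ := dvK.exists_le_v_sub_sum m k hk
  refine ⟨T, κ, sub_eq_zero.mp (dvL.eq_zero_of_forall_le fun n => ?_)⟩
  set N := n + (-m).toNat
  have hN : 0 ≤ m + N := by omega
  have hrem : x - (artinSchreier L p T + algebraMap K L κ) = r N -
      artinSchreier L p (T - ∑ j ∈ Finset.range N, t j) -
        algebraMap K L (κ - ∑ j ∈ Finset.range N, k j) := by
    rw [map_sub, map_sub, (hr N).2]
    ring
  have hκN : ((m + N : ℤ) : WithTop ℤ) ≤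
      dvL.v (algebraMap K L (κ - ∑ j ∈ Finset.range N, k j)) :=
    (le_v_algebraMap hcompat (hκ N)).trans' <| WithTop.coe_le_coe.mpr <|
      le_mul_of_one_le_left hN (by exact_mod_cast (Fact.out : p.Prime).one_le)
  rw [hrem]
  refine (dvL.le_v_sub (dvL.le_v_sub (le_v_of_mem_monomialClosure (hr N).1)
    (dvL.le_v_artinSchreier hN (hT N))) hκN).trans' ?_
  exact WithTop.coe_le_coe.mpr (by omega)

end Extension

open Polynomial in
theorem exists_eq_sum_range_pow {K L : Type*} [Field K] [Field L] [Algebra K L] {p : ℕ}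
    (hp : 1 < p) {y : L} {β : K} (hy : y ^ p - y = algebraMap K L β)
    (hgen : IntermediateField.adjoin K ({y} : Set L) = ⊤) (ℓ : L) :
    ∃ c : ℕ → K, ℓ = ∑ i ∈ Finset.range p, algebraMap K L (c i) * y ^ i := by
  set q : K[X] := X ^ p - (X + C β)
  have hlin : (X + C β).natDegree < p := by rwa [natDegree_X_add_C]
  have hq : q.Monic := monic_X_pow_sub (by rw [degree_X_add_C]; exact_mod_cast hp)
  have hqdeg : q.natDegree = p := by
    rw [natDegree_sub_eq_left_of_natDegree_lt (by rwa [natDegree_X_pow]), natDegree_X_pow]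
  have hqy : aeval y q = 0 := by
    simp only [q, map_sub, map_add, map_pow, aeval_X, aeval_C]
    linear_combination hy
  have hℓ : ℓ ∈ (IntermediateField.adjoin K ({y} : Set L)).toSubalgebra := by
    rw [hgen]
    trivial
  rw [IntermediateField.adjoin_simple_toSubalgebra_of_isAlgebraic
    (IsIntegral.isAlgebraic ⟨q, hq, hqy⟩), Algebra.adjoin_singleton_eq_range_aeval] at hℓ
  obtain ⟨P, rfl⟩ := hℓ
  have hq1 : q ≠ 1 := fun h => by rw [h, natDegree_one] at hqdeg; omega
  refine ⟨fun i => (P %ₘ q).coeff i, ?_⟩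
  change aeval y P = _
  rw [← aeval_modByMonic_eq_self_of_root hqy,
    aeval_eq_sum_range' (hqdeg ▸ natDegree_modByMonic_lt P hq hq1)]
  simp only [Algebra.smul_def]

/-- Let `L = K(y)` be a ramified `C_p`-extension of a local field `K` of
characteristic `p`, with `y^p − y = β`, `v_K(β) = −b < 0`, `p ∤ b` (so the
normalized valuation on `L` restricts to `p·v_K` on `K`). If `ℓ ∈ L`
satisfies `v_L(ℓ) > −b`, then `ℓ ∈ L^℘ + K`. -/
theorem stmt16 (p : ℕ) (hp : p.Prime) {K L : Type*} [Field K] [Field L]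
    [Algebra K L] [CharP K p] (dvK : DVal K) (dvL : DVal L)
    (hcompat : ∀ x : K,
      dvL.v (algebraMap K L x) = ((p : ℤ) : WithTop ℤ) * dvK.v x)
    (b : ℕ) (hb : 0 < b) (hbp : ¬ p ∣ b)
    (y : L) (β : K) (hy : y ^ p - y = algebraMap K L β)
    (hβ : dvK.v β = ((-(b : ℤ) : ℤ) : WithTop ℤ))
    (hgen : IntermediateField.adjoin K ({y} : Set L) = ⊤)
    (ℓ : L) (hℓ : ((-(b : ℤ) : ℤ) : WithTop ℤ) < dvL.v ℓ) :
    ∃ t : L, ∃ k : K, ℓ = (t ^ p - t) + algebraMap K L k := by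
  have := Fact.mk hp
  have : CharP L p := charP_of_injective_algebraMap (algebraMap K L).injective p
  have hvy : dvL.v y = ((-(b : ℤ) : ℤ) : WithTop ℤ) :=
    dvL.v_eq_of_v_pow_sub_self hp.one_lt (by omega) (by rw [hy, hcompat, hβ, ← WithTop.coe_mul])
  obtain ⟨c, hc⟩ := exists_eq_sum_range_pow hp.one_lt hy hgen ℓ
  obtain ⟨t, k, htk⟩ := exists_eq_artinSchreier_add_of_mem hcompat hvy hy hβ.ge le_rfl
    (sub_algebraMap_mem_monomialClosure hcompat hvy hp hbp hc hℓ)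
  exact ⟨t, k + c 0, by rw [map_add, ← add_assoc, ← artinSchreier_apply, ← htk, sub_add_cancel]⟩
end

section
/- Let L be a local field of characteristic p, let M/L be a ramified C_p-extension with ramification break l, and let α ∈ L with max{v_L(x) : x ∈ α + L^℘} = v_L(α) = −a < 0, p ∤ a, and a > l. Let z be a root of z^p − z = α. Then M(z)/M is a ramified C_p-extension with ramification break pa − (p−1)l. -/
namespace DVal
variable {K : Type*} [Field K] (dv : DVal K)

lemma v_eq_top {x : K} : dv.v x = ⊤ ↔ x = 0 := by
  constructor
  · intro h; by_contra hx; exact dv.v_ne_top x hx h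
  · rintro rfl; exact dv.v_zero

lemma v_one_s19 : dv.v 1 = 0 := by
  have h := dv.v_mul 1 1
  rw [mul_one] at h
  obtain ⟨n, hn⟩ := WithTop.ne_top_iff_exists.mp (dv.v_ne_top 1 one_ne_zero)
  rw [← hn] at h ⊢
  have : n + n = n := by exact_mod_cast h.symm
  have : n = 0 := by omega
  simp [this]

lemma v_neg_s19 (x : K) : dv.v (-x) = dv.v x := by
  have hm : dv.v (-1 : K) = 0 := by
    have h := dv.v_mul (-1) (-1)
    rw [neg_mul_neg, one_mul, dv.v_one_s19] at h
    obtain ⟨n, hn⟩ := WithTop.ne_top_iff_exists.mp (dv.v_ne_top (-1) (by norm_num))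
    rw [← hn]
    have : n + n = 0 := by exact_mod_cast (hn ▸ h).symm
    have : n = 0 := by omega
    simp [this]
  calc dv.v (-x) = dv.v ((-1) * x) := by ring_nf
  _ = dv.v x := by rw [dv.v_mul, hm, zero_add]

lemma v_sub (x y : K) : min (dv.v x) (dv.v y) ≤ dv.v (x - y) := by
  rw [sub_eq_add_neg]
  simpa [dv.v_neg_s19] using dv.v_add x (-y)

lemma v_add_left {x y : K} (h : dv.v x < dv.v y) : dv.v (x + y) = dv.v x := by
  refine le_antisymm ?_ ?_
  · by_contra hc
    push_neg at hc
    have h2 : min (dv.v (x + y)) (dv.v y) ≤ dv.v x := by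
      simpa [dv.v_neg_s19] using dv.v_sub (x + y) y
    rcases min_le_iff.mp h2 with h3 | h3
    · exact absurd (lt_of_lt_of_le hc h3) (lt_irrefl _)
    · exact absurd (lt_of_lt_of_le h h3) (lt_irrefl _)
  · simpa [min_eq_left h.le] using dv.v_add x y

lemma v_pow_int {x : K} {c : ℤ} (h : dv.v x = (c : WithTop ℤ)) (n : ℕ) :
    dv.v (x ^ n) = ((n * c : ℤ) : WithTop ℤ) := by
  induction n with
  | zero => simpa using dv.v_one_s19
  | succ n ih =>
      rw [pow_succ, dv.v_mul, ih, h]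
      rw [← WithTop.coe_add]
      congr 1
      push_cast
      ring

lemma v_sum {ι : Type*} (s : Finset ι) (f : ι → K) (c : WithTop ℤ)
    (h : ∀ i ∈ s, c ≤ dv.v (f i)) : c ≤ dv.v (∑ i ∈ s, f i) := by
  classical
  induction s using Finset.induction with
  | empty => simp [dv.v_zero]
  | @insert i s hx ih =>
      rw [Finset.sum_insert hx]
      refine le_trans ?_ (dv.v_add _ _)
      exact le_min (h i (by simp)) (ih fun j hj => h j (by simp [hj]))

lemma v_natCast (n : ℕ) : 0 ≤ dv.v (n : K) := by
  induction n with
  | zero => simp [dv.v_zero]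
  | succ n ih =>
      push_cast
      refine le_trans ?_ (dv.v_add n 1)
      simp [ih, dv.v_one_s19]

lemma v_inv_int {x : K} {c : ℤ} (h : dv.v x = (c : WithTop ℤ)) :
    dv.v x⁻¹ = ((-c : ℤ) : WithTop ℤ) := by
  have hx : x ≠ 0 := by
    intro h0; rw [h0, dv.v_zero] at h; exact (WithTop.top_ne_coe) h
  have h1 : dv.v x + dv.v x⁻¹ = 0 := by
    rw [← dv.v_mul, mul_inv_cancel₀ hx, dv.v_one_s19]
  obtain ⟨d, hd⟩ := WithTop.ne_top_iff_exists.mp (dv.v_ne_top x⁻¹ (inv_ne_zero hx))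
  rw [← hd]
  rw [h, ← hd] at h1
  have : c + d = 0 := by exact_mod_cast h1
  have : d = -c := by omega
  simp [this]

lemma v_mul_ge {x y : K} {α β : ℤ} (h1 : (α : WithTop ℤ) ≤ dv.v x)
    (h2 : (β : WithTop ℤ) ≤ dv.v y) :
    ((α + β : ℤ) : WithTop ℤ) ≤ dv.v (x * y) := by
  rw [dv.v_mul, WithTop.coe_add]
  exact add_le_add h1 h2

lemma v_mul_eq {x y : K} {α β : ℤ} (h1 : dv.v x = (α : WithTop ℤ))
    (h2 : dv.v y = (β : WithTop ℤ)) :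
    dv.v (x * y) = ((α + β : ℤ) : WithTop ℤ) := by
  rw [dv.v_mul, h1, h2, WithTop.coe_add]

end DVal

namespace Stmt19Aux

open DVal

/-- approximate p-th root -/
lemma approx_root {L : Type*} [Field L] (dvL : DVal L) (p : ℕ) (hp : 0 < p)
    (hperf : ∀ x : L, 0 ≤ dvL.v x →
      ∃ y : L, 0 ≤ dvL.v y ∧ (1 : WithTop ℤ) ≤ dvL.v (x - y ^ p))
    (u : L) (e : ℤ) (hu : dvL.v u = ((p * e : ℤ) : WithTop ℤ)) :
    ∃ x : L, dvL.v x = (e : WithTop ℤ) ∧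
      ((p * e + 1 : ℤ) : WithTop ℤ) ≤ dvL.v (u - x ^ p) := by
  obtain ⟨π, hπ⟩ := dvL.v_surj e
  have hπ0 : π ≠ 0 := by
    intro h0; rw [h0, dvL.v_zero] at hπ; exact WithTop.top_ne_coe hπ
  have hπinv : dvL.v π⁻¹ = ((-e : ℤ) : WithTop ℤ) := dvL.v_inv_int hπ
  have hscale : dvL.v (u * (π⁻¹) ^ p) = (0 : WithTop ℤ) := by
    rw [dvL.v_mul, hu, dvL.v_pow_int hπinv p]
    rw [← WithTop.coe_add]
    norm_num
  obtain ⟨y0, hy0, hy0'⟩ := hperf (u * (π⁻¹) ^ p) (by rw [hscale])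
  have hkey : ((p * e + 1 : ℤ) : WithTop ℤ) ≤ dvL.v (u - (y0 * π) ^ p) := by
    have hfac : u - (y0 * π) ^ p = π ^ p * (u * (π⁻¹) ^ p - y0 ^ p) := by
      field_simp
      linear_combination (-u) * (by rw [← mul_pow, mul_inv_cancel₀ hπ0, one_pow] : π ^ p * π⁻¹ ^ p = 1)
    rw [hfac, dvL.v_mul, dvL.v_pow_int hπ p]
    have h9 : ((p * e + 1 : ℤ) : WithTop ℤ) = ((p * e : ℤ) : WithTop ℤ) + 1 := by
      rw [← WithTop.coe_one, ← WithTop.coe_add]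
    rw [h9]
    exact add_le_add le_rfl hy0'
  have hvxp : dvL.v ((y0 * π) ^ p) = ((p * e : ℤ) : WithTop ℤ) := by
    have h1 : (y0 * π) ^ p = u + -(u - (y0 * π) ^ p) := by ring
    have h2 : dvL.v u < dvL.v (-(u - (y0 * π) ^ p)) := by
      rw [dvL.v_neg_s19, hu]
      exact lt_of_lt_of_le (by exact_mod_cast (by omega : (p*e : ℤ) < p*e+1)) hkey
    rw [h1, dvL.v_add_left h2, hu]
  have hx : dvL.v (y0 * π) = (e : WithTop ℤ) := by
    have hne : y0 * π ≠ 0 := by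
      intro h0
      rw [h0, zero_pow (by omega : p ≠ 0), dvL.v_zero] at hvxp
      exact WithTop.top_ne_coe hvxp
    obtain ⟨d, hd⟩ := WithTop.ne_top_iff_exists.mp (dvL.v_ne_top (y0 * π) hne)
    rw [dvL.v_pow_int hd.symm p] at hvxp
    have h5 : (p : ℤ) * d = p * e := by exact_mod_cast hvxp
    have h6 : d = e := by
      have hp' : (p : ℤ) ≠ 0 := by exact_mod_cast hp.ne'
      exact mul_left_cancel₀ hp' h5
    rw [← hd, h6]
  exact ⟨y0 * π, hx, hkey⟩

end Stmt19Aux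

namespace Stmt19Aux

lemma choose_j (p l : ℕ) (hp : p.Prime) (hpl : ¬ p ∣ l) (c : ℤ) :
    ∃ j : ℕ, j < p ∧ (p : ℤ) ∣ (c + j * l) := by
  haveI : Fact p.Prime := ⟨hp⟩
  set w : ZMod p := ((-c : ℤ) : ZMod p) * ((l : ℕ) : ZMod p)⁻¹ with hw
  refine ⟨w.val, ZMod.val_lt w, ?_⟩
  rw [← ZMod.intCast_zmod_eq_zero_iff_dvd]
  have hl0 : ((l : ℕ) : ZMod p) ≠ 0 := by
    rw [Ne, ZMod.natCast_eq_zero_iff]; exact hpl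
  push_cast
  have hval : ((w.val : ℕ) : ZMod p) = w := by
    simp [ZMod.natCast_val, ZMod.cast_id]
  rw [hval, hw]
  field_simp
  push_cast; ring

lemma v_natCast_unit {M : Type*} [Field M] (dv : DVal M) (p : ℕ) (hp : p.Prime)
    [CharP M p] (j : ℕ) (hj : ¬ p ∣ j) : dv.v (j : M) = 0 := by
  haveI : Fact p.Prime := ⟨hp⟩
  set k : ℕ := ((j : ZMod p)⁻¹).val with hk
  have hone : ((j * k : ℕ) : M) = 1 := by
    have h1 : ((j * k : ℕ) : ZMod p) = 1 := by
      push_cast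
      rw [hk]
      have hval : ((((j : ZMod p)⁻¹).val : ℕ) : ZMod p) = (j : ZMod p)⁻¹ := by
        simp [ZMod.natCast_val, ZMod.cast_id]
      rw [hval]
      have hj0 : ((j : ℕ) : ZMod p) ≠ 0 := by
        rw [Ne, ZMod.natCast_eq_zero_iff]; exact hj
      field_simp
    calc ((j * k : ℕ) : M) = (ZMod.castHom dvd_rfl M) ((j * k : ℕ) : ZMod p) := by
          simp
    _ = 1 := by rw [h1, map_one]
  have hsum : dv.v (j : M) + dv.v (k : M) = 0 := by
    rw [← dv.v_mul, ← Nat.cast_mul, hone, dv.v_one_s19]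
  have h1 : 0 ≤ dv.v (j : M) := dv.v_natCast j
  have h2 : 0 ≤ dv.v (k : M) := dv.v_natCast k
  refine le_antisymm ?_ h1
  calc dv.v (j : M) = dv.v (j : M) + 0 := by rw [add_zero]
  _ ≤ dv.v (j : M) + dv.v (k : M) := add_le_add le_rfl h2
  _ = 0 := hsum

end Stmt19Aux

set_option linter.unusedSectionVars false

namespace Stmt19Aux

section Main

variable {p : ℕ} (hp : p.Prime) {L M : Type*} [Field L] [Field M] [Algebra L M]
  [CharP L p] (dvL : DVal L) (dvM : DVal M)
  (hcompat : ∀ x : L, dvM.v (algebraMap L M x) = ((p : ℤ) : WithTop ℤ) * dvL.v x)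
  {l : ℕ} (hl : 0 < l) {y : M} {γ : L} (hy : y ^ p - y = algebraMap L M γ)
  (hγ : dvL.v γ = ((-(l : ℤ) : ℤ) : WithTop ℤ))

include hcompat in
lemma vmap {x : L} {c : ℤ} (hx : dvL.v x = (c : WithTop ℤ)) :
    dvM.v (algebraMap L M x) = ((p * c : ℤ) : WithTop ℤ) := by
  rw [hcompat, hx, ← WithTop.coe_mul]

include hcompat in
lemma vmap_ge {x : L} {c : ℤ} (hx : (c : WithTop ℤ) ≤ dvL.v x) :
    ((p * c : ℤ) : WithTop ℤ) ≤ dvM.v (algebraMap L M x) := by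
  by_cases h0 : x = 0
  · rw [h0, map_zero, dvM.v_zero]; exact le_top
  · obtain ⟨d, hd⟩ := WithTop.ne_top_iff_exists.mp (dvL.v_ne_top x h0)
    rw [vmap dvL dvM hcompat hd.symm]
    rw [← hd] at hx
    have hcd : c ≤ d := by exact_mod_cast hx
    have : (p : ℤ) * c ≤ p * d := by
      have : (0:ℤ) ≤ p := by positivity
      nlinarith
    exact_mod_cast this

include hp hcompat hl hy hγ in
lemma v_y : dvM.v y = ((-(l : ℤ) : ℤ) : WithTop ℤ) := by
  have hγM : dvM.v (algebraMap L M γ) = ((p * (-(l:ℤ)) : ℤ) : WithTop ℤ) :=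
    vmap dvL dvM hcompat hγ
  have hy0 : y ≠ 0 := by
    intro h0
    rw [h0] at hy
    have : algebraMap L M γ = 0 := by
      rw [← hy, zero_pow hp.ne_zero, sub_zero]
    rw [this, dvM.v_zero] at hγM
    exact WithTop.top_ne_coe hγM
  obtain ⟨d, hd⟩ := WithTop.ne_top_iff_exists.mp (dvM.v_ne_top y hy0)
  have hp2 : 2 ≤ p := hp.two_le
  have hd' : dvM.v y = (d : WithTop ℤ) := hd.symm
  -- v (y^p - y) = -p*l
  have hsub : dvM.v (y ^ p - y) = ((p * (-(l:ℤ)) : ℤ) : WithTop ℤ) := by rw [hy]; exact hγM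
  by_cases hdneg : d < 0
  · have hlt : dvM.v (y ^ p) < dvM.v (-y) := by
      rw [dvM.v_neg_s19, dvM.v_pow_int hd' p, hd']
      exact_mod_cast (by nlinarith : (p:ℤ) * d < d)
    have : dvM.v (y ^ p - y) = ((p * d : ℤ) : WithTop ℤ) := by
      rw [sub_eq_add_neg, dvM.v_add_left hlt, dvM.v_pow_int hd' p]
    rw [this] at hsub
    have : (p:ℤ) * d = p * (-(l:ℤ)) := by exact_mod_cast hsub
    have : d = -(l:ℤ) := by
      have hp0 : (p:ℤ) ≠ 0 := by exact_mod_cast hp.ne_zero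
      exact mul_left_cancel₀ hp0 this
    rw [hd', this]
  · push_neg at hdneg
    exfalso
    have h1 : (0 : WithTop ℤ) ≤ dvM.v (y ^ p - y) := by
      refine le_trans ?_ (dvM.v_sub _ _)
      rw [dvM.v_pow_int hd' p, hd']
      refine le_min ?_ ?_
      · exact_mod_cast (by nlinarith : (0:ℤ) ≤ (p:ℤ) * d)
      · exact_mod_cast hdneg
    rw [hsub] at h1
    have : (0:ℤ) ≤ p * (-(l:ℤ)) := by exact_mod_cast h1
    nlinarith [hl]

include hp hγ in
lemma p_not_dvd_l (hperf : ∀ x : L, 0 ≤ dvL.v x →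
      ∃ y : L, 0 ≤ dvL.v y ∧ (1 : WithTop ℤ) ≤ dvL.v (x - y ^ p))
    (hl : 0 < l)
    (hγred : ∀ t : L, dvL.v (γ + (t ^ p - t)) ≤ ((-(l : ℤ) : ℤ) : WithTop ℤ)) :
    ¬ p ∣ l := by
  intro ⟨l', hl'⟩
  have hl'pos : 0 < l' := by
    rcases Nat.eq_zero_or_pos l' with h | h
    · subst h; simp at hl'; omega
    · exact h
  have hp2 := hp.two_le
  have hu : dvL.v (-γ) = ((p * (-(l':ℤ)) : ℤ) : WithTop ℤ) := by
    rw [dvL.v_neg_s19, hγ]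
    congr 1
    push_cast [hl']
    ring
  obtain ⟨x, hx, hclose⟩ := approx_root dvL p hp.pos hperf (-γ) (-(l':ℤ)) hu
  have hcontr := hγred x
  have hbig : ((-(l:ℤ) + 1 : ℤ) : WithTop ℤ) ≤ dvL.v (γ + (x ^ p - x)) := by
    have hrw : γ + (x ^ p - x) = -(-γ - x ^ p) + -x := by ring
    rw [hrw]
    refine le_trans ?_ (dvL.v_add _ _)
    refine le_min ?_ ?_
    · rw [dvL.v_neg_s19]
      refine le_trans ?_ hclose
      exact_mod_cast (by push_cast [hl']; nlinarith : (-(l:ℤ) + 1 : ℤ) ≤ (p:ℤ) * (-(l':ℤ)) + 1)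
    · rw [dvL.v_neg_s19, hx]
      exact_mod_cast (by push_cast [hl']; nlinarith : (-(l:ℤ) + 1 : ℤ) ≤ -(l':ℤ))
  have : ((-(l:ℤ) + 1 : ℤ) : WithTop ℤ) ≤ ((-(l : ℤ) : ℤ) : WithTop ℤ) :=
    le_trans hbig hcontr
  have : (-(l:ℤ) + 1 : ℤ) ≤ -(l:ℤ) := by exact_mod_cast this
  omega

include hp hy in
lemma wp_identity [CharP M p] (x lam lam' : L) (j : ℕ) (t₂ : M)
    (hlam' : lam' = lam + x ^ p * γ ^ j) :
    algebraMap L M lam +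
        ((algebraMap L M x * y ^ j + t₂) ^ p - (algebraMap L M x * y ^ j + t₂)) =
      (algebraMap L M lam' + (t₂ ^ p - t₂)) +
        (algebraMap L M x ^ p * ((y + algebraMap L M γ) ^ j - algebraMap L M γ ^ j)
          - algebraMap L M x * y ^ j) := by
  haveI : Fact p.Prime := ⟨hp⟩
  have hyp : y ^ p = y + algebraMap L M γ := by rw [← hy]; ring
  have hfrob : (algebraMap L M x * y ^ j + t₂) ^ p
      = (algebraMap L M x) ^ p * (y + algebraMap L M γ) ^ j + t₂ ^ p := by
    rw [add_pow_char, mul_pow, ← pow_mul, mul_comm j p, pow_mul, hyp]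
  rw [hfrob, hlam', map_add, map_mul, map_pow, map_pow]
  ring

include hp hcompat hl hy hγ in
lemma res_bound [CharP M p] (c e : ℤ) (j : ℕ) (x : L)
    (hx : dvL.v x = (e : WithTop ℤ)) (hje : (p:ℤ) * e = c + j * l) :
    ((p * c + ((p:ℤ) - 1) * l : ℤ) : WithTop ℤ) ≤
      dvM.v (algebraMap L M x ^ p * ((y + algebraMap L M γ) ^ j - algebraMap L M γ ^ j)) := by
  have hp2 := hp.two_le
  rcases Nat.eq_zero_or_pos j with hj0 | hj1
  · subst hj0
    simp [dvM.v_zero]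
  · -- use geometric sum factorization
    have hfac := geom_sum₂_mul (y + algebraMap L M γ) (algebraMap L M γ) j
    rw [add_sub_cancel_right] at hfac
    rw [← hfac]
    have hvy : dvM.v y = ((-(l : ℤ) : ℤ) : WithTop ℤ) := v_y hp dvL dvM hcompat hl hy hγ
    have hγM : dvM.v (algebraMap L M γ) = ((p * (-(l:ℤ)) : ℤ) : WithTop ℤ) :=
      vmap dvL dvM hcompat hγ
    have hvsum : (((j:ℤ) - 1) * (p * (-(l:ℤ))) : WithTop ℤ) ≤
        dvM.v (∑ i ∈ Finset.range j,
          (y + algebraMap L M γ) ^ i * algebraMap L M γ ^ (j - 1 - i)) := by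
      refine dvM.v_sum _ _ _ ?_
      intro i hi
      have hij : i ≤ j - 1 := by
        have := Finset.mem_range.mp hi; omega
      have hvyp : dvM.v (y + algebraMap L M γ) = ((p * (-(l:ℤ)) : ℤ) : WithTop ℤ) := by
        have hlt : dvM.v (algebraMap L M γ) < dvM.v y := by
          rw [hvy, hγM]
          exact_mod_cast (by nlinarith [hl] : (p:ℤ) * (-(l:ℤ)) < -(l:ℤ))
        rw [add_comm, dvM.v_add_left hlt, hγM]
      have h1 : dvM.v ((y + algebraMap L M γ) ^ i) = ((i * (p * (-(l:ℤ))) : ℤ) : WithTop ℤ) :=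
        dvM.v_pow_int hvyp i
      have h2 : dvM.v (algebraMap L M γ ^ (j - 1 - i)) =
          ((((j:ℤ) - 1 - i) * (p * (-(l:ℤ))) : ℤ) : WithTop ℤ) := by
        rw [dvM.v_pow_int hγM (j - 1 - i)]
        congr 1
        have hmem := Finset.mem_range.mp hi
        have : ((j - 1 - i : ℕ) : ℤ) = (j:ℤ) - 1 - i := by omega
        rw [this]
      rw [dvM.v_mul_eq h1 h2]
      exact_mod_cast (by nlinarith [hl] : ((j:ℤ) - 1) * (p * (-(l:ℤ))) ≤
        i * (p * (-(l:ℤ))) + ((j:ℤ) - 1 - i) * (p * (-(l:ℤ))))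
    have hxp : dvM.v (algebraMap L M x ^ p) = ((p * (p * e) : ℤ) : WithTop ℤ) :=
      dvM.v_pow_int (vmap dvL dvM hcompat hx) p
    have htot := dvM.v_mul_ge (dvM.v_mul_ge (le_of_eq hxp.symm) hvsum) (le_of_eq hvy.symm)
    rw [← mul_assoc]
    refine le_trans ?_ htot
    exact_mod_cast (by nlinarith [hl] : (p * c + ((p:ℤ) - 1) * l : ℤ) ≤
      p * (p * e) + ((j:ℤ) - 1) * (p * (-(l:ℤ))) + -(l:ℤ))

include hp hcompat hl hy hγ in
lemma xyj_val [CharP M p] (c e : ℤ) (j : ℕ) (x : L)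
    (hx : dvL.v x = (e : WithTop ℤ)) (hje : (p:ℤ) * e = c + j * l) :
    dvM.v (algebraMap L M x * y ^ j) = ((c : ℤ) : WithTop ℤ) := by
  have hvy : dvM.v y = ((-(l : ℤ) : ℤ) : WithTop ℤ) := v_y hp dvL dvM hcompat hl hy hγ
  rw [dvM.v_mul_eq (vmap dvL dvM hcompat hx) (dvM.v_pow_int hvy j)]
  congr 1
  nlinarith

/-- pin an integer value from two-sided bounds -/
lemma pin {w : WithTop ℤ} {c : ℤ} (h1 : (c : WithTop ℤ) ≤ w) (h2 : w < ((c+1 : ℤ) : WithTop ℤ)) :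
    w = (c : WithTop ℤ) := by
  cases w with
  | top => exact absurd h2 (by simp)
  | coe d =>
      have e1 : c ≤ d := by exact_mod_cast h1
      have e2 : d < c + 1 := by exact_mod_cast h2
      have : d = c := by omega
      rw [this]

include hp hcompat hl hy hγ in
lemma step [CharP M p]
    (hperf : ∀ x : L, 0 ≤ dvL.v x →
      ∃ y : L, 0 ≤ dvL.v y ∧ (1 : WithTop ℤ) ≤ dvL.v (x - y ^ p))
    (hpl : ¬ p ∣ l) {a : ℕ} (hal : l < a) :
    ∀ k : ℕ, ∀ lam : L,
      ((-(a:ℤ) + max 1 ((l:ℤ) - (k:ℤ)) : ℤ) : WithTop ℤ) ≤ dvL.v lam →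
      ∃ t : M, ((-((p:ℤ)*a) + ((p:ℤ)-1)*l + 1 : ℤ) : WithTop ℤ) ≤
        dvM.v (algebraMap L M lam + (t ^ p - t)) := by
  haveI : Fact p.Prime := ⟨hp⟩
  have hp2 := hp.two_le
  intro k
  induction k with
  | zero =>
      intro lam hlam
      refine ⟨0, ?_⟩
      rw [zero_pow hp.ne_zero, sub_zero, add_zero]
      have heq : (-(a:ℤ) + max 1 ((l:ℤ) - ((0:ℕ):ℤ)) : ℤ) = -(a:ℤ) + l := by
        rw [max_eq_right (by push_cast; omega : (1:ℤ) ≤ (l:ℤ) - ((0:ℕ):ℤ))]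
        push_cast; ring
      rw [heq] at hlam
      have hbnd : ((p * (-(a:ℤ) + l) : ℤ) : WithTop ℤ) ≤ dvM.v (algebraMap L M lam) :=
        vmap_ge dvL dvM hcompat hlam
      refine le_trans ?_ hbnd
      exact_mod_cast (by nlinarith [hl, hal] : (-((p:ℤ)*a) + ((p:ℤ)-1)*l + 1 : ℤ) ≤ p * (-(a:ℤ) + l))
  | succ k ih =>
      intro lam hlam
      by_cases hcase : (1:ℤ) ≤ (l:ℤ) - (((k+1):ℕ):ℤ)
      · -- genuine step possible
        set c : ℤ := -(a:ℤ) + ((l:ℤ) - (((k+1):ℕ):ℤ)) with hc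
        have hbk : (-(a:ℤ) + max 1 ((l:ℤ) - (k:ℤ)) : ℤ) = c + 1 := by
          rw [max_eq_right (by push_cast at hcase ⊢; omega : (1:ℤ) ≤ (l:ℤ) - (k:ℤ))]
          rw [hc]; push_cast; ring
        have hbk1 : (-(a:ℤ) + max 1 ((l:ℤ) - (((k+1):ℕ):ℤ)) : ℤ) = c := by
          rw [max_eq_right hcase]
        rw [hbk1] at hlam
        by_cases hbig : ((c + 1 : ℤ) : WithTop ℤ) ≤ dvL.v lam
        · exact ih lam (by rw [hbk]; exact hbig)
        · push_neg at hbig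
          have hlamc : dvL.v lam = (c : WithTop ℤ) := pin hlam hbig
          obtain ⟨j, hjp, hdvd⟩ := choose_j p l hp hpl c
          obtain ⟨e, he⟩ := hdvd
          have hγ0 : γ ≠ 0 := by
            intro h0; rw [h0, dvL.v_zero] at hγ; exact WithTop.top_ne_coe hγ
          have hγj : dvL.v (γ ^ j) = ((j * (-(l:ℤ)) : ℤ) : WithTop ℤ) := dvL.v_pow_int hγ j
          have hγjinv : dvL.v ((γ ^ j)⁻¹) = ((-(j * (-(l:ℤ))) : ℤ) : WithTop ℤ) :=
            dvL.v_inv_int hγj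
          set u : L := -lam * (γ ^ j)⁻¹ with hu
          have hvu : dvL.v u = ((p * e : ℤ) : WithTop ℤ) := by
            rw [hu]
            have h1 : dvL.v (-lam) = (c : WithTop ℤ) := by rw [dvL.v_neg_s19, hlamc]
            rw [dvL.v_mul_eq h1 hγjinv]
            congr 1
            linear_combination he
          obtain ⟨x, hx, hclose⟩ := approx_root dvL p hp.pos hperf u (e : ℤ) hvu
          set lam' : L := lam + x ^ p * γ ^ j with hlam'
          have hvlam' : ((c + 1 : ℤ) : WithTop ℤ) ≤ dvL.v lam' := by
            have hfac : lam' = (x ^ p - u) * γ ^ j := by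
              rw [hlam', hu]
              field_simp
              ring
            rw [hfac]
            have h1 : ((p * e + 1 : ℤ) : WithTop ℤ) ≤ dvL.v (x ^ p - u) := by
              have hneg : x ^ p - u = -(u - x ^ p) := by ring
              rw [hneg, dvL.v_neg_s19]; exact hclose
            have h2 := dvL.v_mul_ge h1 (le_of_eq hγj.symm)
            refine le_trans (le_of_eq ?_) h2
            congr 1
            linear_combination he
          obtain ⟨t₂, ht₂⟩ := ih lam' (by rw [hbk]; exact hvlam')
          refine ⟨algebraMap L M x * y ^ j + t₂, ?_⟩
          rw [wp_identity hp hy x lam lam' j t₂ hlam']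
          refine le_trans ?_ (dvM.v_add _ _)
          refine le_min ht₂ ?_
          refine le_trans ?_ (dvM.v_sub _ _)
          refine le_min ?_ ?_
          · refine le_trans ?_ (res_bound hp dvL dvM hcompat hl hy hγ c e j x hx he.symm)
            have hcge : -(a:ℤ) + 1 ≤ c := by rw [hc]; push_cast at hcase ⊢; omega
            exact_mod_cast (by nlinarith [hl, hal] :
              (-((p:ℤ)*a) + ((p:ℤ)-1)*l + 1 : ℤ) ≤ p * c + ((p:ℤ)-1)*l)
          · rw [xyj_val hp dvL dvM hcompat hl hy hγ c e j x hx he.symm]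
            have hcge : -(a:ℤ) + 1 ≤ c := by rw [hc]; push_cast at hcase ⊢; omega
            exact_mod_cast (by nlinarith [hl, hal] :
              (-((p:ℤ)*a) + ((p:ℤ)-1)*l + 1 : ℤ) ≤ c)
      · -- bounds coincide, apply ih directly
        push_neg at hcase
        refine ih lam (le_trans (le_of_eq ?_) hlam)
        congr 1
        have h1 : max 1 ((l:ℤ) - (k:ℤ)) = 1 := max_eq_left (by push_cast at hcase ⊢; omega)
        have h2 : max 1 ((l:ℤ) - (((k+1):ℕ):ℤ)) = 1 := max_eq_left (by push_cast at hcase ⊢; omega)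
        rw [h1, h2]

include hp hcompat hl hy hγ in
lemma exists_exact [CharP M p]
    (hperf : ∀ x : L, 0 ≤ dvL.v x →
      ∃ y : L, 0 ≤ dvL.v y ∧ (1 : WithTop ℤ) ≤ dvL.v (x - y ^ p))
    (hpl : ¬ p ∣ l) {a : ℕ} (ha : 0 < a) (hap : ¬ p ∣ a) (hal : l < a)
    {α : L} (hα : dvL.v α = ((-(a : ℤ) : ℤ) : WithTop ℤ)) :
    ∃ t : M, dvM.v (algebraMap L M α + (t ^ p - t)) =
      ((-((p:ℤ)*a) + ((p:ℤ)-1)*l : ℤ) : WithTop ℤ) := by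
  haveI : Fact p.Prime := ⟨hp⟩
  have hp2 := hp.two_le
  set m0 : ℤ := -((p:ℤ)*a) + ((p:ℤ)-1)*l with hm0
  obtain ⟨j, hjp, hdvd⟩ := choose_j p l hp hpl (-(a:ℤ))
  obtain ⟨e, he⟩ := hdvd
  have hj1 : 1 ≤ j := by
    rcases Nat.eq_zero_or_pos j with h0 | h
    · exfalso
      subst h0
      simp only [Nat.cast_zero, zero_mul, add_zero] at he
      have : (p:ℤ) ∣ (a:ℤ) := ⟨-e, by linear_combination -he⟩
      exact hap (by exact_mod_cast this)
    · exact h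
  have hjnd : ¬ p ∣ j := by
    intro hd
    have := Nat.le_of_dvd (by omega) hd
    omega
  have hγ0 : γ ≠ 0 := by
    intro h0; rw [h0, dvL.v_zero] at hγ; exact WithTop.top_ne_coe hγ
  have hγj : dvL.v (γ ^ j) = ((j * (-(l:ℤ)) : ℤ) : WithTop ℤ) := dvL.v_pow_int hγ j
  have hγjinv : dvL.v ((γ ^ j)⁻¹) = ((-(j * (-(l:ℤ))) : ℤ) : WithTop ℤ) := dvL.v_inv_int hγj
  set u : L := -α * (γ ^ j)⁻¹ with hu
  have hvu : dvL.v u = ((p * e : ℤ) : WithTop ℤ) := by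
    rw [hu]
    have h1 : dvL.v (-α) = ((-(a:ℤ) : ℤ) : WithTop ℤ) := by rw [dvL.v_neg_s19, hα]
    rw [dvL.v_mul_eq h1 hγjinv]
    congr 1
    linear_combination he
  obtain ⟨x, hx, hclose⟩ := approx_root dvL p hp.pos hperf u (e : ℤ) hvu
  set lam' : L := α + x ^ p * γ ^ j with hlam'
  have hvlam' : ((-(a:ℤ) + 1 : ℤ) : WithTop ℤ) ≤ dvL.v lam' := by
    have hfac : lam' = (x ^ p - u) * γ ^ j := by
      rw [hlam', hu]
      field_simp
      ring
    rw [hfac]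
    have h1 : ((p * e + 1 : ℤ) : WithTop ℤ) ≤ dvL.v (x ^ p - u) := by
      have hneg : x ^ p - u = -(u - x ^ p) := by ring
      rw [hneg, dvL.v_neg_s19]; exact hclose
    have h2 := dvL.v_mul_ge h1 (le_of_eq hγj.symm)
    refine le_trans (le_of_eq ?_) h2
    congr 1
    linear_combination he
  -- apply step with k = l - 1
  have hstep := step hp dvL dvM hcompat hl hy hγ hperf hpl hal (l - 1) lam' ?_
  swap
  · refine le_trans (le_of_eq ?_) hvlam'
    congr 1
    have h1 : (((l-1 : ℕ)):ℤ) = (l:ℤ) - 1 := by omega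
    rw [h1]
    rw [max_eq_right (by omega : (1:ℤ) ≤ (l:ℤ) - ((l:ℤ) - 1))]
    omega
  obtain ⟨t₂, ht₂⟩ := hstep
  refine ⟨algebraMap L M x * y ^ j + t₂, ?_⟩
  rw [wp_identity hp hy x α lam' j t₂ hlam']
  -- now decompose the residual term
  set X : M := algebraMap L M x ^ p *
    ((y + algebraMap L M γ) ^ j - algebraMap L M γ ^ j) with hX
  set J : M := (j : M) * (algebraMap L M x ^ p * (algebraMap L M γ ^ (j-1) * y)) with hJ
  set R : M := algebraMap L M x ^ p *
    ((y + algebraMap L M γ) ^ j - algebraMap L M γ ^ j - j * (algebraMap L M γ ^ (j-1) * y))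
    with hR
  have hXJR : X = J + R := by
    rw [hX, hJ, hR]
    ring
  have hvy : dvM.v y = ((-(l : ℤ) : ℤ) : WithTop ℤ) := v_y hp dvL dvM hcompat hl hy hγ
  have hγM : dvM.v (algebraMap L M γ) = ((p * (-(l:ℤ)) : ℤ) : WithTop ℤ) :=
    vmap dvL dvM hcompat hγ
  have hxp : dvM.v (algebraMap L M x ^ p) = ((p * (p * e) : ℤ) : WithTop ℤ) :=
    dvM.v_pow_int (vmap dvL dvM hcompat hx) p
  -- J has valuation exactly m0
  have hvJ : dvM.v J = (m0 : WithTop ℤ) := by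
    rw [hJ]
    have h0 : dvM.v ((j : M)) = (0 : WithTop ℤ) := v_natCast_unit dvM p hp j hjnd
    have h0' : dvM.v ((j : M)) = ((0 : ℤ) : WithTop ℤ) := by rw [h0]; rfl
    have h2 : dvM.v (algebraMap L M γ ^ (j-1)) =
        ((((j:ℤ)-1) * (p * (-(l:ℤ))) : ℤ) : WithTop ℤ) := by
      rw [dvM.v_pow_int hγM (j-1)]
      congr 1
      have : (((j-1:ℕ)):ℤ) = (j:ℤ) - 1 := by omega
      rw [this]
    rw [dvM.v_mul_eq h0' (dvM.v_mul_eq hxp (dvM.v_mul_eq h2 hvy))]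
    congr 1
    rw [hm0]
    linear_combination (-(p:ℤ)) * he
  -- R has valuation at least m0 + 1
  have hvR : ((m0 + 1 : ℤ) : WithTop ℤ) ≤ dvM.v R := by
    have hbin : (y + algebraMap L M γ) ^ j =
        ∑ k ∈ Finset.range (j+1), y ^ k * algebraMap L M γ ^ (j-k) * (j.choose k : M) :=
      add_pow y (algebraMap L M γ) j
    have hsplit : (y + algebraMap L M γ) ^ j - algebraMap L M γ ^ j
        - j * (algebraMap L M γ ^ (j-1) * y) =
        ∑ k ∈ Finset.Ico 2 (j+1), y ^ k * algebraMap L M γ ^ (j-k) * (j.choose k : M) := by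
      rcases eq_or_lt_of_le hj1 with hj1' | hj2
      · -- j = 1
        rw [← hj1']
        rw [show (1+1 : ℕ) = 2 from rfl, Finset.Ico_self, Finset.sum_empty]
        simp only [pow_one, Nat.cast_one, one_mul, Nat.sub_self, pow_zero]
        ring
      · rw [hbin, Finset.range_eq_Ico,
            Finset.sum_eq_sum_Ico_succ_bot (by omega : 0 < j+1),
            Finset.sum_eq_sum_Ico_succ_bot (by omega : 1 < j+1)]
        simp only [pow_zero, Nat.choose_zero_right, Nat.choose_one_right, Nat.sub_zero,
          Nat.cast_one, one_mul, mul_one, pow_one]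
        ring
    rw [hR, hsplit, Finset.mul_sum]
    refine dvM.v_sum _ _ _ ?_
    intro k hk
    obtain ⟨hk2, hkj⟩ := Finset.mem_Ico.mp hk
    have hterm : ((p*(p*e) + k * (-(l:ℤ)) + ((j:ℤ)-k) * (p * (-(l:ℤ))) : ℤ) : WithTop ℤ) ≤
        dvM.v (algebraMap L M x ^ p *
          (y ^ k * algebraMap L M γ ^ (j-k) * (j.choose k : M))) := by
      have h1 : dvM.v (y ^ k) = ((k * (-(l:ℤ)) : ℤ) : WithTop ℤ) := dvM.v_pow_int hvy k
      have h2 : dvM.v (algebraMap L M γ ^ (j-k)) =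
          ((((j:ℤ)-k) * (p * (-(l:ℤ))) : ℤ) : WithTop ℤ) := by
        rw [dvM.v_pow_int hγM (j-k)]
        congr 1
        have : (((j-k:ℕ)):ℤ) = (j:ℤ) - k := by omega
        rw [this]
      have h3 : ((0:ℤ) : WithTop ℤ) ≤ dvM.v ((j.choose k : M)) := dvM.v_natCast _
      have h4 := dvM.v_mul_ge (le_of_eq hxp.symm)
        (dvM.v_mul_ge (dvM.v_mul_ge (le_of_eq h1.symm) (le_of_eq h2.symm)) h3)
      refine le_trans (le_of_eq ?_) h4
      congr 1
      ring
    refine le_trans ?_ hterm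
    have hpe : (p:ℤ) * e = -(a:ℤ) + j * l := by linear_combination -he
    have hk2' : (2:ℤ) ≤ (k:ℤ) := by exact_mod_cast hk2
    have hkj' : (k:ℤ) ≤ (j:ℤ) := by
      have : k ≤ j := by omega
      exact_mod_cast this
    have hZ : (m0 + 1 : ℤ) ≤ p*(p*e) + k * (-(l:ℤ)) + ((j:ℤ)-k) * (p * (-(l:ℤ))) := by
      rw [hm0]
      have hppe : (p:ℤ)*((p:ℤ)*e) = (p:ℤ)*(-(a:ℤ) + (j:ℤ)*(l:ℤ)) := by rw [hpe]
      have hl' : (1:ℤ) ≤ (l:ℤ) := by exact_mod_cast hl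
      have hp' : (2:ℤ) ≤ (p:ℤ) := by exact_mod_cast hp2
      have key : (0:ℤ) ≤ ((p:ℤ)-1) * (((k:ℤ)-2) * (l:ℤ)) :=
        mul_nonneg (by omega) (mul_nonneg (by omega) (by positivity))
      nlinarith [hppe, key, hl', hp']
    exact_mod_cast hZ
  -- the term x*y^j has valuation -a ≥ m0+1
  have hvxyj : dvM.v (algebraMap L M x * y ^ j) = ((-(a:ℤ) : ℤ) : WithTop ℤ) :=
    xyj_val hp dvL dvM hcompat hl hy hγ (-(a:ℤ)) e j x hx (by linear_combination -he)
  -- combine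
  have hrest : ((m0 + 1 : ℤ) : WithTop ℤ) ≤
      dvM.v ((algebraMap L M lam' + (t₂ ^ p - t₂)) + (R - algebraMap L M x * y ^ j)) := by
    refine le_trans (le_min ht₂ ?_) (dvM.v_add _ _)
    refine le_trans (le_min hvR ?_) (dvM.v_sub _ _)
    rw [hvxyj]
    exact_mod_cast (by nlinarith [hl, hal] : (m0 + 1 : ℤ) ≤ -(a:ℤ))
  have hfinal : algebraMap L M lam' + (t₂ ^ p - t₂) + X =
      J + ((algebraMap L M lam' + (t₂ ^ p - t₂)) + (R - algebraMap L M x * y ^ j))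
        + algebraMap L M x * y ^ j := by
    rw [hXJR]; ring
  have hgoal : algebraMap L M lam' + (t₂ ^ p - t₂) +
      (X - algebraMap L M x * y ^ j) =
      J + ((algebraMap L M lam' + (t₂ ^ p - t₂)) + (R - algebraMap L M x * y ^ j)) := by
    rw [hXJR]; ring
  rw [hgoal, dvM.v_add_left]
  · exact hvJ
  · rw [hvJ]
    refine lt_of_lt_of_le ?_ hrest
    exact_mod_cast (by omega : m0 < m0 + 1)

end Main




end Stmt19Aux

open Stmt19Aux in
/-- Let `M/L` be a ramified `C_p`-extension of local fields of characteristic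
`p` with ramification break `l` (so `M = L(y)` with `℘(y) = γ`, `γ` reduced of
valuation `−l`). Let `α ∈ L` be reduced with `v_L(α) = −a < 0`, `p ∤ a`,
`a > l`, and let `z` be a root of `z^p − z = α`. Then `M(z)/M` is a ramified
`C_p`-extension with ramification break `pa − (p−1)l`, i.e.
`df_M(α) = −(pa − (p−1)l)`. -/
theorem stmt19 (p : ℕ) (hp : p.Prime) {L M N : Type*} [Field L] [Field M]
    [Field N] [Algebra L M] [Algebra M N] [Algebra L N] [IsScalarTower L M N]
    [CharP L p] (dvL : DVal L) (dvM : DVal M)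
    (hperf : ∀ x : L, 0 ≤ dvL.v x →
      ∃ y : L, 0 ≤ dvL.v y ∧ (1 : WithTop ℤ) ≤ dvL.v (x - y ^ p))
    (hcompat : ∀ x : L,
      dvM.v (algebraMap L M x) = ((p : ℤ) : WithTop ℤ) * dvL.v x)
    (l : ℕ) (hl : 0 < l)
    (y : M) (γ : L) (hy : y ^ p - y = algebraMap L M γ)
    (hγ : dvL.v γ = ((-(l : ℤ) : ℤ) : WithTop ℤ))
    (hγred : ∀ t : L, dvL.v (γ + (t ^ p - t)) ≤ ((-(l : ℤ) : ℤ) : WithTop ℤ))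
    (hMgen : IntermediateField.adjoin L ({y} : Set M) = ⊤)
    (α : L) (a : ℕ) (ha : 0 < a) (hap : ¬ p ∣ a) (hal : l < a)
    (hα : dvL.v α = ((-(a : ℤ) : ℤ) : WithTop ℤ))
    (hαred : ∀ t : L, dvL.v (α + (t ^ p - t)) ≤ ((-(a : ℤ) : ℤ) : WithTop ℤ))
    (z : N) (hz : z ^ p - z = algebraMap L N α)
    (hNgen : IntermediateField.adjoin M ({z} : Set N) = ⊤) :
    z ∉ Set.range (algebraMap M N) ∧
      sSup {m : WithTop ℤ |
          ∃ t : M, m = dvM.v (algebraMap L M α + (t ^ p - t))} =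
        ((-(p * a - (p - 1) * l : ℤ) : ℤ) : WithTop ℤ) := by
  haveI : Fact p.Prime := ⟨hp⟩
  haveI : CharP M p := charP_of_injective_ringHom (algebraMap L M).injective p
  have hp2 := hp.two_le
  have hpl : ¬ p ∣ l := p_not_dvd_l hp dvL hγ hperf hl hγred
  obtain ⟨ts, hts⟩ := exists_exact hp dvL dvM hcompat hl hy hγ hperf hpl ha hap hal hα
  set m0 : ℤ := -((p:ℤ)*a) + ((p:ℤ)-1)*l with hm0
  -- upper bound for all t
  have hub : ∀ t : M, dvM.v (algebraMap L M α + (t ^ p - t)) ≤ (m0 : WithTop ℤ) := by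
    intro t
    by_contra hgt
    push_neg at hgt
    set s : M := t - ts with hs
    have hps : s ^ p - s = (algebraMap L M α + (t ^ p - t))
        - (algebraMap L M α + (ts ^ p - ts)) := by
      rw [hs, sub_pow_char]
      ring
    have hv : dvM.v (s ^ p - s) = (m0 : WithTop ℤ) := by
      rw [hps]
      have hrw : (algebraMap L M α + (t ^ p - t)) - (algebraMap L M α + (ts ^ p - ts))
          = -(algebraMap L M α + (ts ^ p - ts)) + (algebraMap L M α + (t ^ p - t)) := by
        ring
      rw [hrw, dvM.v_add_left, dvM.v_neg_s19, hts]
      rw [dvM.v_neg_s19, hts]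
      exact hgt
    rcases eq_or_ne s 0 with h0 | h0
    · rw [h0, zero_pow hp.ne_zero, sub_zero, dvM.v_zero] at hv
      exact WithTop.top_ne_coe hv
    · obtain ⟨d, hd⟩ := WithTop.ne_top_iff_exists.mp (dvM.v_ne_top s h0)
      have hd' : dvM.v s = (d : WithTop ℤ) := hd.symm
      rcases lt_or_ge d 0 with hneg | hpos
      · have hlt : dvM.v (s ^ p) < dvM.v (-s) := by
          rw [dvM.v_neg_s19, dvM.v_pow_int hd' p, hd']
          exact_mod_cast (by nlinarith : (p:ℤ) * d < d)
        have hv2 : dvM.v (s ^ p - s) = ((p * d : ℤ) : WithTop ℤ) := by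
          rw [sub_eq_add_neg, dvM.v_add_left hlt, dvM.v_pow_int hd' p]
        rw [hv2] at hv
        have hm : (p:ℤ) * d = m0 := by exact_mod_cast hv
        have hdl : (p:ℤ) ∣ (l:ℤ) := ⟨(l:ℤ) - a - d, by linear_combination hm.trans hm0⟩
        exact hpl (by exact_mod_cast hdl)
      · have hge : (0 : WithTop ℤ) ≤ dvM.v (s ^ p - s) := by
          refine le_trans ?_ (dvM.v_sub _ _)
          rw [dvM.v_pow_int hd' p, hd']
          refine le_min ?_ ?_
          · exact_mod_cast (by nlinarith : (0:ℤ) ≤ (p:ℤ) * d)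
          · exact_mod_cast hpos
        rw [hv] at hge
        have : (0:ℤ) ≤ m0 := by exact_mod_cast hge
        rw [hm0] at this
        nlinarith [hal, hl]
  constructor
  · -- z is not in the image of M
    rintro ⟨w, hw⟩
    have hmap : algebraMap M N (w ^ p - w) = algebraMap M N (algebraMap L M α) := by
      rw [map_sub, map_pow, hw, ← IsScalarTower.algebraMap_apply, ← hz]
    have hwα : w ^ p - w = algebraMap L M α := (algebraMap M N).injective hmap
    have hzero : algebraMap L M α + ((-w) ^ p - (-w)) = 0 := by
      have hnp : (-w) ^ p = -(w ^ p) := by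
        calc (-w) ^ p = (-1 * w) ^ p := by ring
        _ = (-1) ^ p * w ^ p := by rw [mul_pow]
        _ = -(w ^ p) := by rw [neg_one_pow_char M]; ring
      rw [hnp, ← hwα]
      ring
    have := hub (-w)
    rw [hzero, dvM.v_zero] at this
    exact absurd this (by simp)
  · -- the supremum
    have hgc : ((-(p * a - (p - 1) * l : ℤ) : ℤ) : WithTop ℤ) = (m0 : WithTop ℤ) := by
      congr 1
      rw [hm0]
      push_cast
      ring
    rw [hgc]
    have hmem : (m0 : WithTop ℤ) ∈ {m : WithTop ℤ |
        ∃ t : M, m = dvM.v (algebraMap L M α + (t ^ p - t))} := ⟨ts, hts.symm⟩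
    refine le_antisymm (csSup_le ⟨_, hmem⟩ ?_) (le_csSup ⟨(m0 : WithTop ℤ), ?_⟩ hmem)
    · rintro b ⟨t, rfl⟩
      exact hub t
    · rintro b ⟨t, rfl⟩
      exact hub t
end
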